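/- Soundness of seminaïve materialisation: for each k ∈ ℕ, upon completion of the k-th iteration of the seminaïve procedure (which applies only rule instances relative to the newly-derived set Δ), the least model of the partial materialisation D' is contained in T_Π^k(I_D). -/
import Mathlib


/-! # A formalisation of basic DatalogMTL notions (ground setting) -/

/-- An interval is an order-convex subset of `ℚ`. -/
def IsInterval (s : Set ℚ) : Prop :=
  ∀ t1 t2 t3 : ℚ, t1 < t2 → t2 < t3 → t1 ∈ s → t3 ∈ s → t2 ∈ s

/-- Interpretations assign to each rational time point a set of ground relational atoms. -/
abbrev Interp (Atom : Type) := ℚ → Set Atom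

/-- Ground metric atoms. -/
inductive MA (Atom : Type) where
  | top : MA Atom
  | bot : MA Atom
  | atom (A : Atom) : MA Atom
  | dminus (ρ : Set ℚ) (M : MA Atom) : MA Atom
  | dplus (ρ : Set ℚ) (M : MA Atom) : MA Atom
  | bminus (ρ : Set ℚ) (M : MA Atom) : MA Atom
  | bplus (ρ : Set ℚ) (M : MA Atom) : MA Atom
  | since (ρ : Set ℚ) (M1 M2 : MA Atom) : MA Atom
  | untl (ρ : Set ℚ) (M1 M2 : MA Atom) : MA Atom

variable {Atom : Type}

/-- Satisfaction of ground metric atoms at a time point. -/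
def sat (I : Interp Atom) : ℚ → MA Atom → Prop
  | _, .top => True
  | _, .bot => False
  | t, .atom A => A ∈ I t
  | t, .dminus ρ M => ∃ t', t - t' ∈ ρ ∧ sat I t' M
  | t, .dplus ρ M => ∃ t', t' - t ∈ ρ ∧ sat I t' M
  | t, .bminus ρ M => ∀ t', t - t' ∈ ρ → sat I t' M
  | t, .bplus ρ M => ∀ t', t' - t ∈ ρ → sat I t' M
  | t, .since ρ M1 M2 =>
      ∃ t', t - t' ∈ ρ ∧ sat I t' M2 ∧ ∀ t'', t' < t'' → t'' < t → sat I t'' M1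
  | t, .untl ρ M1 M2 =>
      ∃ t', t' - t ∈ ρ ∧ sat I t' M2 ∧ ∀ t'', t < t'' → t'' < t' → sat I t'' M1

/-- Ground rule heads, generated by `⊥ | A | ⊟ρ | ⊞ρ`. -/
inductive Hd (Atom : Type) where
  | bot : Hd Atom
  | atom (A : Atom) : Hd Atom
  | bminus (ρ : Set ℚ) (h : Hd Atom) : Hd Atom
  | bplus (ρ : Set ℚ) (h : Hd Atom) : Hd Atom

/-- The metric atom corresponding to a head. -/
def Hd.toMA : Hd Atom → MA Atom
  | .bot => .bot
  | .atom A => .atom A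
  | .bminus ρ h => .bminus ρ h.toMA
  | .bplus ρ h => .bplus ρ h.toMA

/-- Whether a head mentions `⊥` (i.e. the rule is a `⊥`-rule). -/
def Hd.isBot : Hd Atom → Prop
  | .bot => True
  | .atom _ => False
  | .bminus _ h => h.isBot
  | .bplus _ h => h.isBot

/-- The relational atom occurring in a head (none for `⊥`-heads). -/
def Hd.atomOf : Hd Atom → Option Atom
  | .bot => none
  | .atom A => some A
  | .bminus _ h => h.atomOf
  | .bplus _ h => h.atomOf

/-- A ground rule with a non-empty body. -/
structure Rule (Atom : Type) where
  head : Hd Atom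
  body : List (MA Atom)
  body_ne : body ≠ []

/-- `Forces h t A t'` : satisfying head `h` at time `t` requires atom `A` at time `t'`. -/
inductive Forces : Hd Atom → ℚ → Atom → ℚ → Prop where
  | atom (A : Atom) (t : ℚ) : Forces (.atom A) t A t
  | bminus {h : Hd Atom} {s A t'} (ρ : Set ℚ) (t : ℚ) :
      t - s ∈ ρ → Forces h s A t' → Forces (.bminus ρ h) t A t'
  | bplus {h : Hd Atom} {s A t'} (ρ : Set ℚ) (t : ℚ) :
      s - t ∈ ρ → Forces h s A t' → Forces (.bplus ρ h) t A t'

/-- The immediate consequence operator: the least interpretation containing `I` and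
satisfying the head of every non-`⊥` ground rule at every time point where `I`
satisfies all its body atoms. -/
def TP (Φ : Set (Rule Atom)) (I : Interp Atom) : Interp Atom :=
  fun t => I t ∪
    {A | ∃ r ∈ Φ, ¬ r.head.isBot ∧
      ∃ t0, (∀ M ∈ r.body, sat I t0 M) ∧ Forces r.head t0 A t}

/-- A fact `M@ρ` : a ground relational atom together with an interval. -/
abbrev DFact (Atom : Type) := Atom × Set ℚ

abbrev Dataset (Atom : Type) := Set (DFact Atom)

/-- The least model of a dataset. -/
def leastModel (D : Dataset Atom) : Interp Atom :=
  fun t => {A | ∃ ρ, (A, ρ) ∈ D ∧ t ∈ ρ}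

/-- `D ⊨ M@ρ`. -/
def dsat (D : Dataset Atom) (M : MA Atom) (ρ : Set ℚ) : Prop :=
  ∀ t ∈ ρ, sat (leastModel D) t M

def modelsRule (I : Interp Atom) (r : Rule Atom) : Prop :=
  ∀ t, (∀ M ∈ r.body, sat I t M) → sat I t r.head.toMA

def modelsProg (I : Interp Atom) (Φ : Set (Rule Atom)) : Prop :=
  ∀ r ∈ Φ, modelsRule I r

def modelsData (I : Interp Atom) (D : Dataset Atom) : Prop :=
  ∀ F ∈ D, ∀ t ∈ F.2, F.1 ∈ I t

def consistent (Φ : Set (Rule Atom)) (D : Dataset Atom) : Prop :=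
  ∃ I, modelsProg I Φ ∧ modelsData I D

/-- `Φ, D ⊨ A@ρ`. -/
def entailsFact (Φ : Set (Rule Atom)) (D : Dataset Atom) (A : Atom) (ρ : Set ℚ) : Prop :=
  ∀ I, modelsProg I Φ → modelsData I D → ∀ t ∈ ρ, A ∈ I t

/-- Transfinite iteration of an operator on interpretations, taking unions at limits. -/
noncomputable def iterT (T : Interp Atom → Interp Atom) (I0 : Interp Atom) :
    Ordinal → Interp Atom :=
  fun o =>
    Ordinal.limitRecOn o I0 (fun _ ih => T ih)
      (fun o _ ih => fun t => {A | ∃ o', ∃ h : o' < o, A ∈ ih o' h t})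

/-- The first uncountable ordinal. -/
noncomputable def omega1 : Ordinal := (Cardinal.aleph 1).ord

/-- One coalescing step: replace two facts over the same atom whose intervals are
union-compatible by their union. -/
def CoalStep (D D' : Dataset Atom) : Prop :=
  ∃ A ρ1 ρ2, (A, ρ1) ∈ D ∧ (A, ρ2) ∈ D ∧
    IsInterval ρ1 ∧ IsInterval ρ2 ∧ IsInterval (ρ1 ∪ ρ2) ∧ ¬ (ρ1 = ρ2) ∧
    D' = (D \ {(A, ρ1), (A, ρ2)}) ∪ {(A, ρ1 ∪ ρ2)}

/-- `D'` is the result of exhaustively coalescing `E`. -/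
def coalescedFrom (E D' : Dataset Atom) : Prop :=
  Relation.ReflTransGen CoalStep E D' ∧ ∀ E', ¬ CoalStep D' E'

/-- `ρ` is a subset-maximal interval on which `D` satisfies `M`. -/
def maxSat (D : Dataset Atom) (M : MA Atom) (ρ : Set ℚ) : Prop :=
  IsInterval ρ ∧ dsat D M ρ ∧
    ∀ ρ', IsInterval ρ' → dsat D M ρ' → ρ ⊆ ρ' → ρ' = ρ

/-- Semantic entailment `M@ρ0 ⊨ A@ρ` between a metric fact and a relational fact. -/
def mfEntails (M : MA Atom) (ρ0 : Set ℚ) (A : Atom) (ρ : Set ℚ) : Prop :=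
  ∀ I : Interp Atom, (∀ s ∈ ρ0, sat I s M) → ∀ t ∈ ρ, A ∈ I t

/-- An instance of rule `r` for dataset `D` : a list of subset-maximal intervals
for the body atoms. -/
def instOf (r : Rule Atom) (D : Dataset Atom) (ρs : List (Set ℚ)) : Prop :=
  List.Forall₂ (fun M ρ => maxSat D M ρ) r.body ρs

/-- The intersection of a list of intervals. -/
def interList (ρs : List (Set ℚ)) : Set ℚ := ρs.foldr (· ∩ ·) Set.univ

/-- The set of facts derived by rule `r` from dataset `D`. -/
def der (r : Rule Atom) (D : Dataset Atom) : Dataset Atom :=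
  {F | ¬ r.head.isBot ∧ r.head.atomOf = some F.1 ∧
    ∃ ρs, instOf r D ρs ∧
      mfEntails r.head.toMA (interList ρs) F.1 F.2 ∧ IsInterval F.2 ∧
      ∀ ρ', IsInterval ρ' → mfEntails r.head.toMA (interList ρs) F.1 ρ' →
        F.2 ⊆ ρ' → ρ' = F.2}

/-- `Φ[D]`: facts derived from `D` by a one-step application of `Φ`. -/
def progApply (Φ : Set (Rule Atom)) (D : Dataset Atom) : Dataset Atom :=
  {F | ∃ r ∈ Φ, F ∈ der r D}

/-- Instances of `r` for `D` relative to `Δ`. -/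
def instOfRel (r : Rule Atom) (D Δ : Dataset Atom) (ρs : List (Set ℚ)) : Prop :=
  instOf r D ρs ∧ ∃ p ∈ r.body.zip ρs, ¬ dsat (D \ Δ) p.1 p.2

/-- Facts derived by `r` from `D` relative to `Δ`. -/
def derRel (r : Rule Atom) (D Δ : Dataset Atom) : Dataset Atom :=
  {F | ¬ r.head.isBot ∧ r.head.atomOf = some F.1 ∧
    ∃ ρs, instOfRel r D Δ ρs ∧
      mfEntails r.head.toMA (interList ρs) F.1 F.2 ∧ IsInterval F.2 ∧
      ∀ ρ', IsInterval ρ' → mfEntails r.head.toMA (interList ρs) F.1 ρ' →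
        F.2 ⊆ ρ' → ρ' = F.2}

/-- `Φ[D ⋮ Δ]`: one-step semina\"ive application. -/
def progApplyRel (Φ : Set (Rule Atom)) (D Δ : Dataset Atom) : Dataset Atom :=
  {F | ∃ r ∈ Φ, F ∈ derRel r D Δ}

/-- A relational fact entails another relational fact. -/
def dfactEntails (F G : DFact Atom) : Prop := F.1 = G.1 ∧ G.2 ⊆ F.2

/-- A dataset entails a relational fact. -/
def factEntailedBy (E : Dataset Atom) (G : DFact Atom) : Prop :=
  ∀ t ∈ G.2, G.1 ∈ leastModel E t

/-- Atoms occurring in a metric atom. -/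
def atomsMA : MA Atom → Set Atom
  | .top => ∅
  | .bot => ∅
  | .atom A => {A}
  | .dminus _ M => atomsMA M
  | .dplus _ M => atomsMA M
  | .bminus _ M => atomsMA M
  | .bplus _ M => atomsMA M
  | .since _ M1 M2 => atomsMA M1 ∪ atomsMA M2
  | .untl _ M1 M2 => atomsMA M1 ∪ atomsMA M2

/-- Atoms occurring in a head. -/
def atomsHd : Hd Atom → Set Atom
  | .bot => ∅
  | .atom A => {A}
  | .bminus _ h => atomsHd h
  | .bplus _ h => atomsHd h

/-- Atoms occurring in a rule. -/
def atomsRule (r : Rule Atom) : Set Atom :=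
  atomsHd r.head ∪ {A | ∃ M ∈ r.body, A ∈ atomsMA M}

section Predicates

variable {Pred : Type} (Φ : Set (Rule Atom)) (pr : Atom → Pred)

/-- Edge `(Q, R)` of the dependency graph: some rule mentions `Q` in the body
and `R` in the head. -/
def Edge (Q R : Pred) : Prop :=
  ∃ r ∈ Φ, (∃ M ∈ r.body, ∃ A ∈ atomsMA M, pr A = Q) ∧ ∃ A ∈ atomsHd r.head, pr A = R

/-- A predicate is recursive in `Φ` if some path including a cycle ends in it. -/
def RecursivePred (P : Pred) : Prop :=
  ∃ Q, Relation.TransGen (Edge Φ pr) Q Q ∧ Relation.ReflTransGen (Edge Φ pr) Q P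

/-- A rule `r` is `P`-relevant in `Φ`. -/
def PRelevant (P : Pred) (r : Rule Atom) : Prop :=
  ∃ r' ∈ Φ, (r'.head.isBot ∨ ∃ A ∈ atomsHd r'.head, pr A = P) ∧
    ∃ Qh, (∃ A ∈ atomsHd r.head, pr A = Qh) ∧
      ∃ Qb, (∃ M ∈ r'.body, ∃ B ∈ atomsMA M, pr B = Qb) ∧
        Relation.ReflTransGen (Edge Φ pr) Qh Qb

/-- Predicates occurring in a program. -/
def predsOfProg (Φ' : Set (Rule Atom)) : Set Pred :=
  {P | ∃ r ∈ Φ', ∃ A ∈ atomsRule r, pr A = P}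

end Predicates

/-- An interval containing only non-negative rationals. -/
def NonnegInt (ρ : Set ℚ) : Prop := ∀ q ∈ ρ, 0 ≤ q

/-- Metric atoms mentioning only past operators (no `⊤`, `⊥`). -/
def pastOnly : MA Atom → Prop
  | .atom _ => True
  | .dminus ρ M => NonnegInt ρ ∧ pastOnly M
  | .bminus ρ M => NonnegInt ρ ∧ pastOnly M
  | .since ρ M1 M2 => NonnegInt ρ ∧ pastOnly M1 ∧ pastOnly M2
  | _ => False

/-- Heads mentioning only future operators (no `⊥`). -/
def futureHead : Hd Atom → Prop
  | .atom _ => True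
  | .bplus ρ h => NonnegInt ρ ∧ futureHead h
  | _ => False

/-- A forward-propagating program. -/
def ForwardProp (Φ : Set (Rule Atom)) : Prop :=
  ∀ r ∈ Φ, futureHead r.head ∧ ∀ M ∈ r.body, pastOnly M

lemma sat_mono {Atom : Type} {I J : Interp Atom} (h : ∀ t, I t ⊆ J t) :
    ∀ (M : MA Atom) (t : ℚ), sat I t M → sat J t M := by
  intro M
  induction M with
  | top => intro t _; trivial
  | bot => intro t hf; exact hf
  | atom A => intro t hA; exact h t hA
  | dminus ρ M ih => rintro t ⟨t', h1, h2⟩; exact ⟨t', h1, ih t' h2⟩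
  | dplus ρ M ih => rintro t ⟨t', h1, h2⟩; exact ⟨t', h1, ih t' h2⟩
  | bminus ρ M ih => intro t hs t' ht'; exact ih t' (hs t' ht')
  | bplus ρ M ih => intro t hs t' ht'; exact ih t' (hs t' ht')
  | since ρ M1 M2 ih1 ih2 =>
      rintro t ⟨t', h1, h2, h3⟩
      exact ⟨t', h1, ih2 t' h2, fun t'' ha hb => ih1 t'' (h3 t'' ha hb)⟩
  | untl ρ M1 M2 ih1 ih2 =>
      rintro t ⟨t', h1, h2, h3⟩
      exact ⟨t', h1, ih2 t' h2, fun t'' ha hb => ih1 t'' (h3 t'' ha hb)⟩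

lemma forces_sat {Atom : Type} {J : Interp Atom} :
    ∀ (h : Hd Atom), ¬ h.isBot → ∀ t0 : ℚ,
      (∀ A t', Forces h t0 A t' → A ∈ J t') → sat J t0 h.toMA := by
  intro h
  induction h with
  | bot => intro hb; exact absurd trivial hb
  | atom A => intro _ t0 hf; exact hf A t0 (Forces.atom A t0)
  | bminus ρ h ih =>
      intro hb t0 hf s hs
      exact ih hb s (fun A t' hforce => hf A t' (Forces.bminus ρ t0 hs hforce))
  | bplus ρ h ih =>
      intro hb t0 hf s hs
      exact ih hb s (fun A t' hforce => hf A t' (Forces.bplus ρ t0 hs hforce))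

lemma coalStep_subset {Atom : Type} {E E' : Dataset Atom} (h : CoalStep E E') :
    ∀ t, leastModel E' t ⊆ leastModel E t := by
  obtain ⟨A, ρ1, ρ2, h1, h2, _, _, _, _, hE'⟩ := h
  intro t B hB
  obtain ⟨ρ, hρ, htρ⟩ := hB
  rw [hE'] at hρ
  rcases hρ with hρ | hρ
  · exact ⟨ρ, hρ.1, htρ⟩
  · simp only [Set.mem_singleton_iff, Prod.ext_iff] at hρ
    obtain ⟨rfl, rfl⟩ := hρ
    rcases htρ with ht | ht
    · exact ⟨ρ1, h1, ht⟩
    · exact ⟨ρ2, h2, ht⟩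

lemma coalChain_subset {Atom : Type} {E E' : Dataset Atom}
    (h : Relation.ReflTransGen CoalStep E E') :
    ∀ t, leastModel E' t ⊆ leastModel E t := by
  induction h with
  | refl => intro t; exact subset_rfl
  | tail _ hstep ih => intro t; exact (coalStep_subset hstep t).trans (ih t)

lemma mem_interList {s : ℚ} : ∀ {ρs : List (Set ℚ)},
    s ∈ interList ρs → ∀ ρ ∈ ρs, s ∈ ρ := by
  intro ρs
  induction ρs with
  | nil => intro _ ρ hρ; simp at hρ
  | cons a l ih =>
      intro hs ρ hρ
      have hs' : s ∈ a ∩ interList l := hs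
      rw [List.mem_cons] at hρ
      rcases hρ with rfl | hρ
      · exact hs'.1
      · exact ih hs'.2 ρ hρ

lemma body_sat {Atom : Type} {D : Dataset Atom} :
    ∀ {body : List (MA Atom)} {ρs : List (Set ℚ)},
      List.Forall₂ (fun M ρ => maxSat D M ρ) body ρs →
      ∀ s ∈ interList ρs, ∀ M ∈ body, sat (leastModel D) s M := by
  intro body ρs h
  induction h with
  | nil => intro s _ M hM; simp at hM
  | @cons M ρ body' ρs' hpair _ ih =>
      intro s hs M' hM'
      have hs' : s ∈ ρ ∩ interList ρs' := hs
      rw [List.mem_cons] at hM'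
      rcases hM' with rfl | hM'
      · exact hpair.2.1 s hs'.1
      · exact ih s hs'.2 M' hM'

/-- soundness of seminaive materialisation. -/
theorem seminaive_sound {Atom : Type} (Φ : Set (Rule Atom)) (D : Dataset Atom)
    (hΦ : Φ.Finite) (hD : D.Finite)
    (D' Δ N : ℕ → Dataset Atom)
    (hD0 : D' 0 = D) (hΔ0 : Δ 0 = D)
    (hN : ∀ k, N (k + 1) = progApplyRel Φ (D' k) (Δ k))
    (hC : ∀ k, coalescedFrom (D' k ∪ N (k + 1)) (D' (k + 1)))
    (hΔ : ∀ k, Δ (k + 1) =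
      {F ∈ D' (k + 1) | ∃ G ∈ N (k + 1), dfactEntails F G ∧ ¬ factEntailedBy (D' k) G}) :
    ∀ (k : ℕ) (t : ℚ), leastModel (D' k) t ⊆ (TP Φ)^[k] (leastModel D) t := by
  intro k
  induction k with
  | zero => intro t; rw [hD0]; exact subset_rfl
  | succ k ih =>
      intro t A hA
      have hco := coalChain_subset (hC k).1 t hA
      obtain ⟨ρ, hρ, htρ⟩ := hco
      rw [Function.iterate_succ_apply']
      rcases hρ with hρ | hρ
      · -- old fact
        exact Or.inl (ih t ⟨ρ, hρ, htρ⟩)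
      · -- newly derived fact
        rw [hN k] at hρ
        obtain ⟨r, hr, hnb, hatom, ρs, ⟨hinst, _⟩, hmf, _, _⟩ := hρ
        set J := TP Φ ((TP Φ)^[k] (leastModel D)) with hJ
        have hsatJ : ∀ s ∈ interList ρs, sat J s r.head.toMA := by
          intro s hs
          have hbody : ∀ M ∈ r.body, sat ((TP Φ)^[k] (leastModel D)) s M := by
            intro M hM
            exact sat_mono ih M s (body_sat hinst s hs M hM)
          refine forces_sat r.head hnb s ?_
          intro B t' hforce
          exact Or.inr ⟨r, hr, hnb, s, hbody, hforce⟩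
        exact hmf J hsatJ t htρ
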